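/- arXiv:math/9902131 — 2 statements merged into one kernel-verified Lean document; each statement's English description precedes it below -/
import Mathlib

section
/- Assume in addition W ≠ V (so that W^⊥ ≠ 0). Then A has an eigenvalue α > 1 if and only if B is positive definite on U ∩ W, i.e. B x x > 0 for every nonzero x ∈ U ∩ W (this includes the case U ∩ W = 0). -/
noncomputable section

/-- The Minkowski bilinear form of index 1 on `ℝ^{n+2}`:
`B x y = ∑_{i=0}^{n} x i * y i − x (n+1) * y (n+1)`. -/
def mB (n : ℕ) : (Fin (n+2) → ℝ) →ₗ[ℝ] (Fin (n+2) → ℝ) →ₗ[ℝ] ℝ :=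
  LinearMap.mk₂ ℝ
    (fun x y => ∑ i : Fin (n+2), (if (i : ℕ) = n+1 then (-1:ℝ) else 1) * x i * y i)
    (fun x x' y => by
      rw [← Finset.sum_add_distrib]
      exact Finset.sum_congr rfl fun i _ => by simp only [Pi.add_apply]; ring)
    (fun c x y => by
      rw [smul_eq_mul, Finset.mul_sum]
      exact Finset.sum_congr rfl fun i _ => by simp only [Pi.smul_apply, smul_eq_mul]; ring)
    (fun x y y' => by
      rw [← Finset.sum_add_distrib]
      exact Finset.sum_congr rfl fun i _ => by simp only [Pi.add_apply]; ring)
    (fun c x y => by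
      rw [smul_eq_mul, Finset.mul_sum]
      exact Finset.sum_congr rfl fun i _ => by simp only [Pi.smul_apply, smul_eq_mul]; ring)

/-- The orthogonal complement `S^⊥ = {x | ∀ s ∈ S, B x s = 0}` w.r.t. the Minkowski form. -/
def mperp (n : ℕ) (S : Submodule ℝ (Fin (n+2) → ℝ)) : Submodule ℝ (Fin (n+2) → ℝ) where
  carrier := {x | ∀ s ∈ S, mB n x s = 0}
  zero_mem' := fun s _ => by simp
  add_mem' := fun ha hb s hs => by simp [ha s hs, hb s hs]
  smul_mem' := fun c a ha s hs => by simp [ha s hs]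

/-- A subspace is pseudo-euclidean if the Minkowski form restricted to it
is nondegenerate and it contains a timelike vector. -/
def IsPseudoEuclidean (n : ℕ) (S : Submodule ℝ (Fin (n+2) → ℝ)) : Prop :=
  (∀ x ∈ S, (∀ y ∈ S, mB n x y = 0) → x = 0) ∧ ∃ x ∈ S, mB n x x < 0

lemma mB_apply (n : ℕ) (x y : Fin (n+2) → ℝ) :
    mB n x y = ∑ i : Fin (n+2), (if (i : ℕ) = n+1 then (-1:ℝ) else 1) * x i * y i := rfl

lemma mB_symm (n : ℕ) (x y : Fin (n+2) → ℝ) : mB n x y = mB n y x := by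
  rw [mB_apply, mB_apply]
  exact Finset.sum_congr rfl fun i _ => by ring

lemma mB_split (n : ℕ) (x y : Fin (n+2) → ℝ) :
    mB n x y = (∑ i : Fin (n+1), x i.castSucc * y i.castSucc)
      - x (Fin.last (n+1)) * y (Fin.last (n+1)) := by
  rw [mB_apply, Fin.sum_univ_castSucc]
  have h1 : ((Fin.last (n+1) : Fin (n+2)) : ℕ) = n+1 := rfl
  rw [h1, if_pos rfl]
  have h2 : ∀ i : Fin (n+1),
      (if ((i.castSucc : Fin (n+2)) : ℕ) = n+1 then (-1:ℝ) else 1) * x i.castSucc * y i.castSucc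
        = x i.castSucc * y i.castSucc := by
    intro i
    rw [if_neg (by simpa using i.is_lt.ne), one_mul]
  rw [Finset.sum_congr rfl fun i _ => h2 i]
  ring

lemma mB_perp_timelike_pos (n : ℕ) {t x : Fin (n+2) → ℝ} (ht : mB n t t < 0)
    (hxt : mB n x t = 0) (hx : x ≠ 0) : 0 < mB n x x := by
  rw [mB_split] at ht hxt ⊢
  set A := ∑ i : Fin (n+1), x i.castSucc * x i.castSucc with hA
  set Bs := ∑ i : Fin (n+1), x i.castSucc * t i.castSucc with hBs
  set C := ∑ i : Fin (n+1), t i.castSucc * t i.castSucc with hC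
  have hCS : Bs ^ 2 ≤ A * C := by
    have := Finset.sum_mul_sq_le_sq_mul_sq Finset.univ
      (fun i : Fin (n+1) => x i.castSucc) (fun i : Fin (n+1) => t i.castSucc)
    calc Bs ^ 2 = (∑ i : Fin (n+1), x i.castSucc * t i.castSucc) ^ 2 := by rw [hBs]
    _ ≤ (∑ i : Fin (n+1), x i.castSucc ^ 2) * ∑ i : Fin (n+1), t i.castSucc ^ 2 := this
    _ = A * C := by rw [hA, hC]; congr 1 <;> exact Finset.sum_congr rfl fun i _ => pow_two _
  have hCnn : 0 ≤ C := Finset.sum_nonneg fun i _ => mul_self_nonneg _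
  have hAnn : 0 ≤ A := Finset.sum_nonneg fun i _ => mul_self_nonneg _
  have hT2 : 0 < t (Fin.last (n+1)) * t (Fin.last (n+1)) := by linarith
  rcases eq_or_lt_of_le hAnn with hA0 | hApos
  · -- A = 0 : all spatial coords of x vanish, then x = 0, contradiction
    exfalso
    apply hx
    have hxc : ∀ i : Fin (n+1), x i.castSucc = 0 := by
      intro i
      have := (Finset.sum_eq_zero_iff_of_nonneg (fun i _ => mul_self_nonneg (x i.castSucc))).1
        hA0.symm i (Finset.mem_univ i)
      exact mul_self_eq_zero.1 this
    have hBs0 : Bs = 0 := by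
      rw [hBs]; exact Finset.sum_eq_zero fun i _ => by rw [hxc i, zero_mul]
    have hXlast : x (Fin.last (n+1)) = 0 := by
      have : x (Fin.last (n+1)) * t (Fin.last (n+1)) = 0 := by linarith
      rcases mul_eq_zero.1 this with h | h
      · exact h
      · exact absurd h (by intro h0; rw [h0, mul_zero] at hT2; exact lt_irrefl 0 hT2)
    funext i
    refine Fin.lastCases ?_ ?_ i
    · exact hXlast
    · exact hxc
  · -- A > 0
    set X := x (Fin.last (n+1)); set T := t (Fin.last (n+1))
    have hBX : Bs = X * T := by linarith
    have h2 : (X*X)*(T*T) < A*(T*T) := by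
      have hc : A * C < A * (T*T) := mul_lt_mul_of_pos_left (by linarith) hApos
      calc X*X*(T*T) = Bs^2 := by rw [hBX]; ring
        _ ≤ A*C := hCS
        _ < A*(T*T) := hc
    have h3 : X*X < A := lt_of_mul_lt_mul_right (by linarith) (le_of_lt hT2)
    linarith

lemma mB_isSymm (n : ℕ) : (mB n).IsSymm := ⟨fun x y => by
  simpa using mB_symm n x y⟩

lemma mB_isRefl (n : ℕ) : (mB n).IsRefl := (mB_isSymm n).isRefl

lemma mB_nondeg (n : ℕ) : LinearMap.BilinForm.Nondegenerate (mB n) := by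
  refine LinearMap.BilinForm.Nondegenerate.ofSeparatingLeft ?_
  intro x h
  funext i
  have hx := h (Pi.single i 1)
  rw [mB_apply, Fintype.sum_eq_single i (fun j hj => by
    rw [Pi.single_eq_of_ne hj, mul_zero])] at hx
  rw [Pi.single_eq_same, mul_one] at hx
  show x i = (0 : Fin (n+2) → ℝ) i
  rw [Pi.zero_apply]
  rcases eq_or_ne ((i : ℕ)) (n+1) with h1 | h1
  · rw [if_pos h1] at hx; linarith
  · rw [if_neg h1, one_mul] at hx; exact hx

lemma mperp_eq (n : ℕ) (S : Submodule ℝ (Fin (n+2) → ℝ)) :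
    mperp n S = LinearMap.BilinForm.orthogonal (mB n) S := by
  ext x
  constructor
  · intro hx s hs
    have := hx s hs
    rwa [mB_symm]
  · intro hx s hs
    have := hx s hs
    rwa [mB_symm] at this

lemma mperp_posdef (n : ℕ) {S : Submodule ℝ (Fin (n+2) → ℝ)} (hS : IsPseudoEuclidean n S)
    {x : Fin (n+2) → ℝ} (hx : x ∈ mperp n S) (h0 : x ≠ 0) : 0 < mB n x x := by
  obtain ⟨t, htS, ht⟩ := hS.2
  exact mB_perp_timelike_pos n ht (hx t htS) h0

section Proj

variable {n : ℕ} {U : Submodule ℝ (Fin (n+2) → ℝ)} {p : (Fin (n+2) → ℝ) →ₗ[ℝ] (Fin (n+2) → ℝ)}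

lemma proj_vanish (hU : IsPseudoEuclidean n U)
    (hp : ∀ x, p x ∈ mperp n U ∧ x - p x ∈ U) {u} (hu : u ∈ U) : p u = 0 := by
  have h1 : p u ∈ U := by
    have := (hp u).2
    have h2 : p u = u - (u - p u) := by ring_nf
    rw [h2]; exact U.sub_mem hu this
  exact hU.1 (p u) h1 (fun y hy => (hp u).1 y hy)

lemma proj_fix (hU : IsPseudoEuclidean n U)
    (hp : ∀ x, p x ∈ mperp n U ∧ x - p x ∈ U) {a} (ha : a ∈ mperp n U) : p a = a := by
  have h1 : a - p a ∈ mperp n U := (mperp n U).sub_mem ha (hp a).1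
  have h2 : a - p a = 0 := hU.1 _ (hp a).2 (fun y hy => h1 y hy)
  exact (sub_eq_zero.1 h2).symm

end Proj

section Main

variable {n : ℕ} {W U : Submodule ℝ (Fin (n+2) → ℝ)}
  {p p' : (Fin (n+2) → ℝ) →ₗ[ℝ] (Fin (n+2) → ℝ)}

lemma mB_decomp (hp : ∀ x, p x ∈ mperp n U ∧ x - p x ∈ U) (z : Fin (n+2) → ℝ) :
    mB n z z = mB n (p z) (p z) + mB n (z - p z) (z - p z) := by
  have h1 : mB n (p z) (z - p z) = 0 := (hp z).1 _ (hp z).2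
  have h2 : mB n (z - p z) (p z) = 0 := by rw [mB_symm]; exact h1
  have e : mB n (p z + (z - p z)) (p z + (z - p z))
      = mB n (p z) (p z) + mB n (p z) (z - p z)
        + (mB n (z - p z) (p z) + mB n (z - p z) (z - p z)) := by
    simp only [map_add, LinearMap.add_apply]
    ring
  have hz : p z + (z - p z) = z := by abel
  rw [hz] at e
  rw [e, h1, h2]
  ring

lemma mB_T_eq (hp : ∀ x, p x ∈ mperp n U ∧ x - p x ∈ U)
    (hp' : ∀ x, p' x ∈ mperp n W ∧ x - p' x ∈ W)
    {x y : Fin (n+2) → ℝ} (hy : y ∈ mperp n W) :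
    mB n (p' (p x)) y = mB n (p x) (p y) := by
  have s1 : mB n (p x - p' (p x)) y = 0 := by
    rw [mB_symm]; exact hy _ (hp' (p x)).2
  have s2 : mB n (p x) (y - p y) = 0 := (hp x).1 _ (hp y).2
  have e1 : mB n (p' (p x)) y = mB n (p x) y := by
    have := map_sub (mB n) (p x) (p' (p x))
    have e : mB n (p x - p' (p x)) y = mB n (p x) y - mB n (p' (p x)) y := by
      rw [this]; rfl
    rw [e] at s1; linarith
  have e2 : mB n (p x) y = mB n (p x) (p y) := by
    have e : mB n (p x) (y - p y) = mB n (p x) y - mB n (p x) (p y) := map_sub (mB n (p x)) y (p y)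
    rw [e] at s2; linarith
  rw [e1, e2]

end Main

lemma timelike_orth_inter {n : ℕ} {W U : Submodule ℝ (Fin (n+2) → ℝ)}
    (hU : IsPseudoEuclidean n U)
    (hpos : ∀ x ∈ U ⊓ W, x ≠ 0 → 0 < mB n x x) :
    ∃ u ∈ U, mB n u u < 0 ∧ ∀ w ∈ U ⊓ W, mB n u w = 0 := by
  obtain ⟨t, htU, ht⟩ := hU.2
  have hnd : (LinearMap.BilinForm.restrict (mB n) (U ⊓ W)).Nondegenerate := by
    refine LinearMap.BilinForm.Nondegenerate.ofSeparatingLeft ?_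
    intro z hz
    by_contra hz0
    have hz1 : (z : Fin (n+2) → ℝ) ≠ 0 := by
      simpa [Submodule.coe_eq_zero] using hz0
    have h1 : mB n z.1 z.1 = 0 := hz z
    have h2 : 0 < mB n z.1 z.1 := hpos z.1 z.2 hz1
    linarith
  have hcompl := LinearMap.BilinForm.isCompl_orthogonal_of_restrict_nondegenerate
    (B := mB n) (W := U ⊓ W) (mB_isRefl n) hnd
  have htop : (U ⊓ W) ⊔ (LinearMap.BilinForm.orthogonal (mB n) (U ⊓ W)) = ⊤ :=
    hcompl.sup_eq_top
  have hmem : t ∈ (U ⊓ W) ⊔ (LinearMap.BilinForm.orthogonal (mB n) (U ⊓ W)) := by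
    rw [htop]; trivial
  obtain ⟨v, hv, z, hzorth, hvz⟩ := Submodule.mem_sup.1 hmem
  refine ⟨t - v, U.sub_mem htU hv.1, ?_, ?_⟩
  · have htv : t - v = z := by rw [← hvz]; abel
    have hvu : mB n v (t - v) = 0 := by
      rw [htv]; exact hzorth v hv
    have huv : mB n (t - v) v = 0 := by rw [mB_symm]; exact hvu
    have hvv : 0 ≤ mB n v v := by
      rcases eq_or_ne v 0 with h | h
      · simp [h]
      · exact le_of_lt (hpos v hv h)
    have hexp : mB n t t = mB n v v + mB n v (t - v) + (mB n (t - v) v + mB n (t - v) (t - v)) := by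
      have hco : v + (t - v) = t := by abel
      conv_lhs => rw [← hco]
      simp only [map_add, LinearMap.add_apply]
      ring
    rw [hvu, huv] at hexp
    linarith
  · intro w hw
    have htv : t - v = z := by rw [← hvz]; abel
    rw [mB_symm, htv]
    exact hzorth w hw

lemma big_top {n : ℕ} {W U : Submodule ℝ (Fin (n+2) → ℝ)}
    (hsum : W ⊔ U = ⊤)
    (hpos : ∀ x ∈ U ⊓ W, x ≠ 0 → 0 < mB n x x) :
    (mperp n W ⊔ mperp n U) ⊔ (U ⊓ W) = ⊤ := by
  have hV : Module.finrank ℝ (Fin (n+2) → ℝ) = n+2 := Module.finrank_fin_fun ℝ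
  have frW : Module.finrank ℝ (mperp n W) = (n+2) - Module.finrank ℝ W := by
    rw [mperp_eq, LinearMap.BilinForm.finrank_orthogonal (mB_nondeg n) W, hV]
  have frU : Module.finrank ℝ (mperp n U) = (n+2) - Module.finrank ℝ U := by
    rw [mperp_eq, LinearMap.BilinForm.finrank_orthogonal (mB_nondeg n) U, hV]
  have hdisj1 : mperp n W ⊓ mperp n U = ⊥ := by
    rw [Submodule.eq_bot_iff]
    rintro z ⟨hzW, hzU⟩
    apply (mB_nondeg n).1 z
    intro y
    have hy : y ∈ W ⊔ U := by rw [hsum]; trivial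
    obtain ⟨w, hw, u, hu, rfl⟩ := Submodule.mem_sup.1 hy
    have := hzW w hw
    have := hzU u hu
    simp only [map_add]
    linarith
  have hfr1 : Module.finrank ℝ ↥(mperp n W ⊔ mperp n U)
      = Module.finrank ℝ ↥(mperp n W) + Module.finrank ℝ ↥(mperp n U) := by
    have h := Submodule.finrank_sup_add_finrank_inf_eq (mperp n W) (mperp n U)
    rw [hdisj1, finrank_bot] at h
    omega
  have hdisj2 : (mperp n W ⊔ mperp n U) ⊓ (U ⊓ W) = ⊥ := by
    rw [Submodule.eq_bot_iff]
    rintro z ⟨hz1, hz2⟩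
    obtain ⟨a, ha, b, hb, rfl⟩ := Submodule.mem_sup.1 hz1
    by_contra hz0
    have h0 : 0 < mB n (a+b) (a+b) := hpos _ hz2 hz0
    have h1 : mB n a (a+b) = 0 := ha _ hz2.2
    have h2 : mB n b (a+b) = 0 := hb _ hz2.1
    have h3 : mB n (a+b) (a+b) = mB n a (a+b) + mB n b (a+b) := by
      simp only [map_add, LinearMap.add_apply]
      linarith [mB_symm n a b]
    rw [h1, h2] at h3
    linarith
  have hfrI : Module.finrank ℝ ↥W + Module.finrank ℝ ↥U
      = (n+2) + Module.finrank ℝ ↥(U ⊓ W) := by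
    have h := Submodule.finrank_sup_add_finrank_inf_eq W U
    rw [hsum, finrank_top, hV, inf_comm] at h
    omega
  have hfr2 : Module.finrank ℝ ↥((mperp n W ⊔ mperp n U) ⊔ (U ⊓ W))
      = Module.finrank ℝ ↥(mperp n W ⊔ mperp n U) + Module.finrank ℝ ↥(U ⊓ W) := by
    have h := Submodule.finrank_sup_add_finrank_inf_eq (mperp n W ⊔ mperp n U) (U ⊓ W)
    rw [hdisj2, finrank_bot] at h
    omega
  have hWle : Module.finrank ℝ ↥W ≤ n+2 := by have := Submodule.finrank_le (R := ℝ) W; omega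
  have hUle : Module.finrank ℝ ↥U ≤ n+2 := by have := Submodule.finrank_le (R := ℝ) U; omega
  apply Submodule.eq_top_of_finrank_eq
  rw [hV, hfr2, hfr1, frW, frU]
  omega

lemma rayleigh_aux {E : Type} [AddCommGroup E] [Module ℝ E] [FiniteDimensional ℝ E]
    (b : E →ₗ[ℝ] E →ₗ[ℝ] ℝ) (hb : ∀ z w, b z w = b w z)
    (hposdef : ∀ z : E, z ≠ 0 → 0 < b z z)
    (T : E →ₗ[ℝ] E) (hT : ∀ z w, b (T z) w = b z (T w))
    (x : E) (hx : x ≠ 0) (hray : b x x < b (T x) x) :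
    ∃ α : ℝ, 1 < α ∧ ∃ v : E, v ≠ 0 ∧ T v = α • v := by
  classical
  let c : InnerProductSpace.Core ℝ E :=
    { inner := fun z w => b z w
      conj_inner_symm := fun z w => by simpa using hb w z
      re_inner_nonneg := fun z => by
        rcases eq_or_ne z 0 with h | h
        · simp [h]
        · simpa using le_of_lt (hposdef z h)
      add_left := fun z w d => by simp only [map_add, LinearMap.add_apply]
      smul_left := fun z w r => by simp [map_smul]
      definite := fun z h => by
        by_contra h0
        have := hposdef z h0
        have h2 : b z z = 0 := h
        linarith }
  letI : NormedAddCommGroup E := c.toNormedAddCommGroup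
  letI : InnerProductSpace ℝ E := InnerProductSpace.ofCore c.toCore
  haveI : Nontrivial E := ⟨⟨x, 0, hx⟩⟩
  have hinner : ∀ z w : E, (inner ℝ z w : ℝ) = b z w := fun z w => rfl
  have hsym : T.IsSymmetric := by
    intro z w
    show (inner ℝ (T z) w : ℝ) = inner ℝ z (T w)
    rw [hinner, hinner]
    exact hT z w
  have heig := hsym.hasEigenvalue_iSup_of_finiteDimensional
  set f : { z : E // z ≠ 0 } → ℝ :=
    fun z => RCLike.re (inner ℝ (T z.1) z.1 : ℝ) / ‖(z.1 : E)‖ ^ 2 with hf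
  have hbdd : BddAbove (Set.range f) := by
    refine ⟨‖LinearMap.toContinuousLinearMap T‖, ?_⟩
    rintro y ⟨z, rfl⟩
    have hz : (0:ℝ) < ‖(z.1 : E)‖ := norm_pos_iff.2 z.2
    have h1 : (inner ℝ (T z.1) z.1 : ℝ) ≤ ‖T z.1‖ * ‖(z.1 : E)‖ :=
      real_inner_le_norm _ _
    have h2 : ‖T z.1‖ ≤ ‖LinearMap.toContinuousLinearMap T‖ * ‖(z.1 : E)‖ := by
      have := (LinearMap.toContinuousLinearMap T).le_opNorm z.1
      simpa using this
    have h3 : (0:ℝ) ≤ ‖LinearMap.toContinuousLinearMap T‖ := (LinearMap.toContinuousLinearMap T).opNorm_nonneg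
    rw [hf]
    simp only [RCLike.re_to_real]
    rw [div_le_iff₀ (by positivity)]
    nlinarith [norm_nonneg (T z.1)]
  have hval : 1 < f ⟨x, hx⟩ := by
    rw [hf]
    simp only [RCLike.re_to_real]
    have hn2 : ‖(x : E)‖ ^ 2 = b x x := by
      rw [← real_inner_self_eq_norm_sq, hinner]
    rw [hinner, hn2, one_lt_div (hposdef x hx)]
    exact hray
  have hsup : 1 < ⨆ z : { z : E // z ≠ 0 }, f z :=
    lt_of_lt_of_le hval (le_ciSup hbdd _)
  obtain ⟨v, hv⟩ := heig.exists_hasEigenvector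
  have hveq : T v = (⨆ z : { z : E // z ≠ 0 }, f z) • v := by
    have := Module.End.mem_eigenspace_iff.1 hv.1
    simpa using this
  exact ⟨_, hsup, v, hv.2, hveq⟩

theorem eigen_main2
    {n : ℕ} {W U : Submodule ℝ (Fin (n+2) → ℝ)}
    {p p' : (Fin (n+2) → ℝ) →ₗ[ℝ] (Fin (n+2) → ℝ)}
    (hW : IsPseudoEuclidean n W) (hU : IsPseudoEuclidean n U)
    (hsum : W ⊔ U = ⊤)
    (hp : ∀ x, p x ∈ mperp n U ∧ x - p x ∈ U)
    (hp' : ∀ x, p' x ∈ mperp n W ∧ x - p' x ∈ W)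
    (hpos : ∀ x ∈ U ⊓ W, x ≠ 0 → 0 < mB n x x) :
    ∃ α : ℝ, 1 < α ∧ ∃ v ∈ mperp n W, v ≠ 0 ∧ p' (p v) = α • v := by
  classical
  obtain ⟨u, huU, huu, huorth⟩ := timelike_orth_inter hU hpos
  have hbig := big_top hsum hpos
  have humem : u ∈ (mperp n W ⊔ mperp n U) ⊔ (U ⊓ W) := by rw [hbig]; trivial
  obtain ⟨s, hs, w0, hw0, hsw⟩ := Submodule.mem_sup.1 humem
  obtain ⟨x, hxW, a, haU, hxa⟩ := Submodule.mem_sup.1 hs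
  have hw00 : w0 = 0 := by
    by_contra h0
    have hpos0 : 0 < mB n w0 w0 := hpos w0 hw0 h0
    have e1 : mB n w0 u = 0 := by rw [mB_symm]; exact huorth w0 hw0
    have e2 : mB n w0 x = 0 := by rw [mB_symm]; exact hxW w0 hw0.2
    have e3 : mB n w0 a = 0 := by rw [mB_symm]; exact haU w0 hw0.1
    have hw0eq : u - x - a = w0 := by rw [← hsw, ← hxa]; abel
    have e4 : mB n w0 (u - x - a) = 0 := by
      have h5 : mB n w0 (u - x - a) = mB n w0 u - mB n w0 x - mB n w0 a := by
        simp only [map_sub]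
      rw [h5, e1, e2, e3]; ring
    rw [hw0eq] at e4; linarith
  have hux : x = u - a := by
    have : x + a = u := by rw [hxa, ← hsw, hw00, add_zero]
    rw [← this]; abel
  have hpx : p x = -a := by
    rw [hux, map_sub, proj_vanish hU hp huU, proj_fix hU hp haU, zero_sub]
  have hxpx : x - p x = u := by rw [hpx, hux]; abel
  have hx0 : x ≠ 0 := by
    intro h
    rw [h] at hux
    have hau : u = a := by
      have := hux.symm; rwa [sub_eq_zero] at this
    have hu0 : u = 0 := hU.1 u huU (fun y hy => by rw [hau]; exact haU y hy)
    rw [hu0] at huu; simp at huu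
  have hxx : 0 < mB n x x := mperp_posdef n hW hxW hx0
  have hpxpx : mB n (p x) (p x) = mB n x x - mB n u u := by
    have := mB_decomp hp x
    rw [hxpx] at this; linarith
  -- set up the abstract Rayleigh lemma on E := ↥(mperp n W)
  set E := ↥(mperp n W)
  let b : E →ₗ[ℝ] E →ₗ[ℝ] ℝ := LinearMap.BilinForm.restrict (mB n) (mperp n W)
  have hbapp : ∀ z w : E, b z w = mB n z.1 w.1 := fun z w => rfl
  let T : E →ₗ[ℝ] E :=
    { toFun := fun z => ⟨p' (p z.1), (hp' (p z.1)).1⟩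
      map_add' := fun z w => by
        apply Subtype.ext
        show p' (p ((z : Fin (n+2) → ℝ) + (w : Fin (n+2) → ℝ))) = p' (p z.1) + p' (p w.1)
        rw [map_add, map_add]
      map_smul' := fun r z => by
        apply Subtype.ext
        show p' (p (r • (z : Fin (n+2) → ℝ))) = r • p' (p z.1)
        rw [map_smul, map_smul] }
  have hTapp : ∀ z : E, (T z).1 = p' (p z.1) := fun z => rfl
  have hb : ∀ z w : E, b z w = b w z := fun z w => mB_symm n z.1 w.1
  have hposdef : ∀ z : E, z ≠ 0 → 0 < b z z := by
    intro z hz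
    have hz1 : (z : Fin (n+2) → ℝ) ≠ 0 := by
      simpa [Submodule.coe_eq_zero] using hz
    exact mperp_posdef n hW z.2 hz1
  have hT : ∀ z w : E, b (T z) w = b z (T w) := by
    intro z w
    rw [hbapp, hbapp, hTapp, hTapp]
    rw [mB_T_eq hp hp' w.2, mB_symm n z.1 (p' (p w.1)), mB_T_eq hp hp' z.2,
      mB_symm n (p w.1) (p z.1)]
  have hray : b ⟨x, hxW⟩ ⟨x, hxW⟩ < b (T ⟨x, hxW⟩) ⟨x, hxW⟩ := by
    rw [hbapp, hbapp, hTapp]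
    show mB n x x < mB n (p' (p x)) x
    rw [mB_T_eq hp hp' hxW, hpxpx]
    linarith
  have hxE : (⟨x, hxW⟩ : E) ≠ 0 := by
    simp [Subtype.ext_iff, hx0]
  obtain ⟨α, hα, v, hv0, hveq⟩ := rayleigh_aux b hb hposdef T hT ⟨x, hxW⟩ hxE hray
  refine ⟨α, hα, v.1, v.2, ?_, ?_⟩
  · intro h
    exact hv0 (Subtype.ext h)
  · have := congrArg Subtype.val hveq
    rw [hTapp] at this
    exact this



/-- `A` has an eigenvalue `α > 1` iff the Minkowski form is positive definite
on `U ∩ W` (including the case `U ∩ W = 0`). -/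
theorem eigenvalue_gt_one_iff_posdef_inter
    (n : ℕ) (hn : 0 < n) (W U : Submodule ℝ (Fin (n+2) → ℝ))
    (hW : IsPseudoEuclidean n W) (hU : IsPseudoEuclidean n U)
    (hsum : W ⊔ U = ⊤)
    (p p' : (Fin (n+2) → ℝ) →ₗ[ℝ] (Fin (n+2) → ℝ))
    (hp : ∀ x, p x ∈ mperp n U ∧ x - p x ∈ U)
    (hp' : ∀ x, p' x ∈ mperp n W ∧ x - p' x ∈ W)
    (hWtop : W ≠ ⊤) :
    (∃ α : ℝ, 1 < α ∧ ∃ v ∈ mperp n W, v ≠ 0 ∧ p' (p v) = α • v) ↔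
    (∀ x ∈ U ⊓ W, x ≠ 0 → 0 < mB n x x) := by
  constructor
  · rintro ⟨α, hα, v, hv, hv0, heig⟩ x hxUW hx0
    have hvv : 0 < mB n v v := mperp_posdef n hW hv hv0
    have h1 : mB n (p' (p v)) v = mB n (p v) (p v) := mB_T_eq hp hp' hv
    have h2 : mB n (p v) (p v) = α * mB n v v := by
      rw [← h1, heig]
      simp [map_smul]
    have h3 : mB n (v - p v) (v - p v) = (1 - α) * mB n v v := by
      have := mB_decomp hp v
      rw [h2] at this; linarith
    have htl : mB n (v - p v) (v - p v) < 0 := by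
      rw [h3]
      have : 1 - α < 0 := by linarith
      exact mul_neg_of_neg_of_pos this hvv
    have hperp : mB n x (v - p v) = 0 := by
      have hxv : mB n x v = 0 := by rw [mB_symm]; exact hv x hxUW.2
      have hxpv : mB n x (p v) = 0 := by rw [mB_symm]; exact (hp v).1 x hxUW.1
      have : mB n x (v - p v) = mB n x v - mB n x (p v) := map_sub (mB n x) v (p v)
      rw [this, hxv, hxpv]; ring
    exact mB_perp_timelike_pos n htl hperp hx0
  · intro hpos
    exact eigen_main2 hW hU hsum hp hp' hpos
end
end

section
/- Let S be a subspace of V such that B restricted to S is degenerate, i.e. there exists a nonzero x ∈ S with B x y = 0 for all y ∈ S. Then the set {x ∈ S : B x x = 0} of isotropic vectors of S is a linear subspace of V of dimension 1, namely the radical {x ∈ S : B x y = 0 for all y ∈ S} of the restriction of B to S; in particular, an isotropic subspace of V contains exactly one one-dimensional isotropic subspace, so two subspheres whose defining subspaces intersect in an isotropic subspace have exactly one common point. -/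
/-!
Write `x = (u, a)` with `a` the time coordinate. The form is positive definite on the hyperplane
`a = 0`, so a nonzero isotropic vector has `a ≠ 0`. If `y = (w, b)` is isotropic and orthogonal
to `x`, then `a • y - b • x` is isotropic and lies in that hyperplane, hence vanishes. Thus every
isotropic vector of `S` is a multiple of a nonzero radical vector, and so is itself radical.
-/

noncomputable section

namespace Minkowski

variable {n : ℕ}

lemma mB_comm (x y : Fin (n+2) → ℝ) : mB n x y = mB n y x := by
  simp only [mB, LinearMap.mk₂_apply]
  exact Finset.sum_congr rfl fun _ _ => by ring

lemma mB_apply_eq_sum_castSucc_sub_last (x y : Fin (n+2) → ℝ) :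
    mB n x y = ∑ i : Fin (n+1), x i.castSucc * y i.castSucc
      - x (Fin.last (n+1)) * y (Fin.last (n+1)) := by
  show ∑ i : Fin (n+2), (if (i : ℕ) = n+1 then (-1:ℝ) else 1) * x i * y i = _
  rw [Fin.sum_univ_castSucc, Fin.val_last, if_pos rfl, sub_eq_add_neg]
  congr 1
  · exact Finset.sum_congr rfl fun i _ => by
      rw [if_neg (by rw [Fin.val_castSucc]; omega), one_mul]
  · ring

lemma eq_zero_of_mB_self_eq_zero_of_last_eq_zero {x : Fin (n+2) → ℝ}
    (hlast : x (Fin.last (n+1)) = 0) (hxx : mB n x x = 0) : x = 0 := by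
  rw [mB_apply_eq_sum_castSucc_sub_last, hlast, mul_zero, sub_zero,
    Finset.sum_eq_zero_iff_of_nonneg fun i _ => mul_self_nonneg _] at hxx
  funext j
  induction j using Fin.lastCases with
  | last => exact hlast
  | cast i => exact mul_self_eq_zero.mp (hxx i (Finset.mem_univ i))

lemma exists_eq_smul_of_isotropic_of_orthogonal {x y : Fin (n+2) → ℝ} (hx : x ≠ 0)
    (hxx : mB n x x = 0) (hyy : mB n y y = 0) (hxy : mB n x y = 0) :
    ∃ c : ℝ, y = c • x := by
  set a := x (Fin.last (n+1))
  set b := y (Fin.last (n+1))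
  have ha : a ≠ 0 := fun ha => hx (eq_zero_of_mB_self_eq_zero_of_last_eq_zero ha hxx)
  have hcomb : a • y - b • x = 0 := by
    have hyx : mB n y x = 0 := by rw [mB_comm, hxy]
    refine eq_zero_of_mB_self_eq_zero_of_last_eq_zero ?_ ?_
    · simp only [Pi.sub_apply, Pi.smul_apply, smul_eq_mul, a, b]
      ring
    · simp [hxx, hyy, hxy, hyx]
  refine ⟨b / a, ?_⟩
  rw [sub_eq_zero] at hcomb
  rw [div_eq_inv_mul, mul_smul, ← hcomb, smul_smul, inv_mul_cancel₀ ha, one_smul]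

end Minkowski

open Minkowski

theorem isotropic_vectors_of_degenerate_subspace_general
    (n : ℕ) (S : Submodule ℝ (Fin (n+2) → ℝ))
    (hdeg : ∃ x ∈ S, x ≠ 0 ∧ ∀ y ∈ S, mB n x y = 0) :
    {x : Fin (n+2) → ℝ | x ∈ S ∧ mB n x x = 0} =
      {x : Fin (n+2) → ℝ | x ∈ S ∧ ∀ y ∈ S, mB n x y = 0} ∧
    ∃ v : Fin (n+2) → ℝ, v ≠ 0 ∧
      {x : Fin (n+2) → ℝ | x ∈ S ∧ mB n x x = 0} =
        (Submodule.span ℝ {v} : Set (Fin (n+2) → ℝ)) := by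
  obtain ⟨v, hvS, hv, hvrad⟩ := hdeg
  have hvv : mB n v v = 0 := hvrad v hvS
  have isotropic_iff : ∀ x, x ∈ S ∧ mB n x x = 0 ↔ ∃ c : ℝ, c • v = x := by
    refine fun x => ⟨fun ⟨hxS, hxx⟩ => ?_, ?_⟩
    · obtain ⟨c, rfl⟩ := exists_eq_smul_of_isotropic_of_orthogonal hv hvv hxx (hvrad x hxS)
      exact ⟨c, rfl⟩
    · rintro ⟨c, rfl⟩
      exact ⟨S.smul_mem c hvS, by simp [hvv]⟩
  refine ⟨Set.ext fun x => ⟨fun hx => ?_, fun ⟨hxS, hxrad⟩ => ⟨hxS, hxrad x hxS⟩⟩,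
    v, hv, Set.ext fun x => by simpa [Submodule.mem_span_singleton] using isotropic_iff x⟩
  obtain ⟨c, rfl⟩ := (isotropic_iff x).mp hx
  exact ⟨S.smul_mem c hvS, fun y hyS => by simp [hvrad y hyS]⟩

/-- If the Minkowski form restricted to a subspace `S` is degenerate, then the
set of isotropic vectors of `S` coincides with the radical of the restriction
of the form to `S`, and it is a one-dimensional linear subspace; hence two
subspheres whose defining subspaces intersect in an isotropic subspace have
exactly one common point. -/
theorem isotropic_vectors_of_degenerate_subspace
    (n : ℕ) (hn : 0 < n) (S : Submodule ℝ (Fin (n+2) → ℝ))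
    (hdeg : ∃ x ∈ S, x ≠ 0 ∧ ∀ y ∈ S, mB n x y = 0) :
    {x : Fin (n+2) → ℝ | x ∈ S ∧ mB n x x = 0} =
      {x : Fin (n+2) → ℝ | x ∈ S ∧ ∀ y ∈ S, mB n x y = 0} ∧
    ∃ v : Fin (n+2) → ℝ, v ≠ 0 ∧
      {x : Fin (n+2) → ℝ | x ∈ S ∧ mB n x x = 0} =
        (Submodule.span ℝ {v} : Set (Fin (n+2) → ℝ)) :=
  isotropic_vectors_of_degenerate_subspace_general n S hdeg
end
end
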